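/- Let K be an integrable function on ℝ, α ∈ ℝ, and f, g, h Schwartz functions with h integrable. Then ∫ h(x) H_{K,α}(f,g)(x) dx = ∫ H_{D₋₁K, 1-α}(h,g)(y) f(y) dy, where H_{K,α}(f,g)(x) = ∫ f(x-t)g(x-αt)K(t)dt and D₋₁K(t) = K(-t). -/

import Mathlib

open MeasureTheory SchwartzMap

/-!
The substitution `(x, t) ↦ (x - t, -t)` is a measure-preserving involution of `ℝ × ℝ` carrying
the integrand `h(x) f(x - t) g(x - αt) K(t)` of the left-hand side to the integrand
`h(y - t) g(y - (1 - α)t) K(-t) f(y)` of the right-hand side, so by Fubini both sides equal the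
same integral over the plane. That integral converges absolutely, being dominated by
`‖f‖∞ ‖g‖∞ |h(x)| |K(t)|`.
-/

section Shear

variable (G : Type*) [AddGroup G] [MeasurableSpace G] [MeasurableAdd₂ G] [MeasurableNeg G]

def MeasurableEquiv.subNeg : G × G ≃ᵐ G × G :=
  .ofInvolutive (fun p => (p.1 - p.2, -p.2)) (fun p => by simp) (by fun_prop)

variable {G} {μ : Measure G} [SFinite μ] [μ.IsAddRightInvariant] [μ.IsNegInvariant]

theorem measurePreserving_subNeg :
    MeasurePreserving (MeasurableEquiv.subNeg G) (μ.prod μ) (μ.prod μ) :=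
  ((MeasurePreserving.id μ).prod (Measure.measurePreserving_neg μ)).comp
    (measurePreserving_sub_prod μ μ)

theorem integral_integral_sub_neg {E : Type*} [NormedAddCommGroup E] [NormedSpace ℝ E]
    {F : G → G → E} (hF : Integrable (Function.uncurry F) (μ.prod μ)) :
    ∫ x, ∫ t, F x t ∂μ ∂μ = ∫ y, ∫ t, F (y - t) (-t) ∂μ ∂μ := by
  have hφ := measurePreserving_subNeg (μ := μ)
  rw [integral_integral hF,
    integral_integral (f := fun y t => F (y - t) (-t)) ((hφ.integrable_comp hF.1).mpr hF)]
  exact (hφ.integral_comp' _).symm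

end Shear

section BilinearHilbert

variable {𝕜 : Type*} [RCLike 𝕜]

/-- `bilinearHilbert K α f g` is the paper's `H_{K,α}(f, g)`. -/
noncomputable def bilinearHilbert (K : ℝ → 𝕜) (α : ℝ) (f g : ℝ → 𝕜) (x : ℝ) : 𝕜 :=
  ∫ t, f (x - t) * g (x - α * t) * K t

variable {h K f g : ℝ → 𝕜} {Cf Cg : ℝ}

theorem integrable_mul_bilinearHilbert_integrand (hh : Integrable h) (hK : Integrable K)
    (hf : StronglyMeasurable f) (hg : StronglyMeasurable g)
    (hfC : ∀ x, ‖f x‖ ≤ Cf) (hgC : ∀ x, ‖g x‖ ≤ Cg) (α : ℝ) :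
    Integrable (fun p : ℝ × ℝ => h p.1 * (f (p.1 - p.2) * g (p.1 - α * p.2) * K p.2))
      (volume.prod volume) := by
  have hfg : StronglyMeasurable fun p : ℝ × ℝ => f (p.1 - p.2) * g (p.1 - α * p.2) :=
    (hf.comp_measurable (by fun_prop)).mul (hg.comp_measurable (by fun_prop))
  have hbound : ∀ p : ℝ × ℝ, ‖f (p.1 - p.2) * g (p.1 - α * p.2)‖ ≤ Cf * Cg := fun p =>
    (norm_mul_le _ _).trans <|
      mul_le_mul (hfC _) (hgC _) (norm_nonneg _) ((norm_nonneg _).trans (hfC 0))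
  refine ((hh.mul_prod hK).bdd_mul hfg.aestronglyMeasurable (ae_of_all _ hbound)).congr ?_
  exact ae_of_all _ fun p => by ring

theorem integral_mul_bilinearHilbert (hh : Integrable h) (hK : Integrable K)
    (hf : StronglyMeasurable f) (hg : StronglyMeasurable g)
    (hfC : ∀ x, ‖f x‖ ≤ Cf) (hgC : ∀ x, ‖g x‖ ≤ Cg) (α : ℝ) :
    ∫ x, h x * bilinearHilbert K α f g x
      = ∫ y, bilinearHilbert (fun t => K (-t)) (1 - α) h g y * f y :=
  calc ∫ x, h x * bilinearHilbert K α f g x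
      = ∫ x, ∫ t, h x * (f (x - t) * g (x - α * t) * K t) := by
        simp only [bilinearHilbert, integral_const_mul]
    _ = ∫ y, ∫ t, h (y - t) * (f (y - t - -t) * g (y - t - α * -t) * K (-t)) :=
        integral_integral_sub_neg
          (integrable_mul_bilinearHilbert_integrand hh hK hf hg hfC hgC α)
    _ = ∫ y, bilinearHilbert (fun t => K (-t)) (1 - α) h g y * f y := by
        congr 1 with y
        rw [bilinearHilbert, ← integral_mul_const]
        congr 1 with t
        rw [sub_neg_eq_add, sub_add_cancel, show y - t - α * -t = y - (1 - α) * t by ring]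
        ring

end BilinearHilbert

theorem bht_duality_general
    (K : ℝ → ℂ) (hK : Integrable K volume) (α : ℝ) (f g h : 𝓢(ℝ, ℂ)) :
    ∫ x : ℝ, h x * ∫ t : ℝ, f (x - t) * g (x - α * t) * K t
      = ∫ y : ℝ, (∫ t : ℝ, h (y - t) * g (y - (1 - α) * t) * K (-t)) * f y :=
  integral_mul_bilinearHilbert h.integrable hK f.continuous.stronglyMeasurable
    g.continuous.stronglyMeasurable (norm_le_seminorm ℝ f) (norm_le_seminorm ℝ g) α

/-- duality: for integrable `K`, `α ∈ ℝ`, Schwartz `f, g, h` with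
`h` integrable,
`∫ h(x) H_{K,α}(f,g)(x) dx = ∫ H_{D₋₁K,1-α}(h,g)(y) f(y) dy`, where
`H_{K,α}(f,g)(x) = ∫ f(x-t)g(x-αt)K(t)dt` and `D₋₁K(t) = K(-t)`. -/
theorem bht_duality
    (K : ℝ → ℂ) (hK : Integrable K volume) (α : ℝ) (f g h : 𝓢(ℝ, ℂ))
    (hh : Integrable (fun x : ℝ => h x) volume) :
    ∫ x : ℝ, h x * ∫ t : ℝ, f (x - t) * g (x - α * t) * K t
      = ∫ y : ℝ, (∫ t : ℝ, h (y - t) * g (y - (1 - α) * t) * K (-t)) * f y :=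
  bht_duality_general K hK α f g h
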